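/- Let S = (H, w, μ) be a summary, q a CQ with res(q) ⊆ dom(μ), τ an answer to μ(q) on H, P ∈ B_τ, and π ∈ MaxExp_τ(P). Then for all atoms a, a' ∈ q: there exists a block u ∈ P containing both a and a' if and only if π(a) = π(a'). -/

import Mathlib

/- ## Basic RDF notions -/

attribute [local instance] Classical.propDecidable

/-- A term is a resource or a variable. -/
inductive Term (R V : Type) where
  | res : R → Term R V
  | var : V → Term R V
deriving DecidableEq

/-- An atom is a triple of terms. -/
abbrev Atom (R V : Type) := Term R V × Term R V × Term R V

/-- An RDF graph is a finite set of triples of resources. -/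
abbrev RDFGraph (R : Type) := Finset (R × R × R)

/-- A conjunctive query is a finite set of atoms. -/
abbrev CQ (R V : Type) := Finset (Atom R V)

variable {R V : Type} [DecidableEq R] [DecidableEq V]

/-- The resources occurring in an RDF graph. -/
def graphRes (G : RDFGraph R) : Finset R :=
  G.image (fun t => t.1) ∪ G.image (fun t => t.2.1) ∪ G.image (fun t => t.2.2)

/-- A summary `S = (H, w, μ)`: a summarisation graph `H`, a weight function `w`
positive on `H`, and a summarisation function `μ` defined on a finite set `dom` of
resources, surjective onto the resources of `H` (the buckets). -/
structure Summary (R : Type) [DecidableEq R] where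
  H : RDFGraph R
  w : R × R × R → ℕ
  dom : Finset R
  μ : R → R
  w_pos : ∀ h ∈ H, 0 < w h
  surj : ∀ b ∈ graphRes H, ∃ r ∈ dom, μ r = b

/-- Application of `μ` to a resource (resources outside `dom μ` are left unchanged). -/
def appMu (S : Summary R) (r : R) : R := if r ∈ S.dom then S.μ r else r

/-- Application of `μ` to a triple of resources. -/
def muT (S : Summary R) (t : R × R × R) : R × R × R :=
  (appMu S t.1, appMu S t.2.1, appMu S t.2.2)

/-- The `S`-size of a bucket: the number of resources mapped to it. -/
def size1 (S : Summary R) (b : R) : ℕ := (S.dom.filter (fun r => S.μ r = b)).card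

/-- The `S`-size of a triple of buckets. -/
def size3 (S : Summary R) (h : R × R × R) : ℕ := size1 S h.1 * size1 S h.2.1 * size1 S h.2.2

/-- `S` represents the RDF graph `G`. -/
def represents (S : Summary R) (G : RDFGraph R) : Prop :=
  graphRes G ⊆ S.dom ∧ S.H = G.image (muT S) ∧
    ∀ h ∈ S.H, S.w h = (G.filter (fun t => muT S t = h)).card

/-- `⟦S⟧`: the set of all RDF graphs represented by `S`. -/
def worlds (S : Summary R) : Set (RDFGraph R) := {G | represents S G}

/-- A summary is consistent if it represents at least one graph. -/
def consistent (S : Summary R) : Prop := (worlds S).Nonempty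

/- ## Queries, substitutions and answers -/

def varsT : Term R V → Finset V
  | .res _ => ∅
  | .var x => {x}

def resT : Term R V → Finset R
  | .res r => {r}
  | .var _ => ∅

def varsA (a : Atom R V) : Finset V := varsT a.1 ∪ varsT a.2.1 ∪ varsT a.2.2

def resA (a : Atom R V) : Finset R := resT a.1 ∪ resT a.2.1 ∪ resT a.2.2

/-- The variables of a CQ. -/
def varsQ (q : CQ R V) : Finset V := q.biUnion varsA

/-- The resources of a CQ. -/
def resQ (q : CQ R V) : Finset R := q.biUnion resA

/-- The terms of a CQ. -/
def termsQ (q : CQ R V) : Finset (Term R V) := q.biUnion (fun a => {a.1, a.2.1, a.2.2})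

/-- A substitution (a partial map from variables to resources) applied to a term. -/
def appT (π : V → Option R) : Term R V → Option R
  | .res r => some r
  | .var x => π x

/-- Application of a substitution to a term, with a default value (only used when the
substitution is undefined on a variable of the term). -/
def appTD [Inhabited R] (π : V → Option R) (t : Term R V) : R := (appT π t).getD default

/-- Application of a substitution to an atom. -/
def appAtomD [Inhabited R] (π : V → Option R) (a : Atom R V) : R × R × R :=
  (appTD π a.1, appTD π a.2.1, appTD π a.2.2)

/-- `ans(q, G)`: the answers to the CQ `q` on the graph `G`, i.e. substitutions whose
domain is exactly `var(q)` and which map every atom of `q` into `G`. -/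
def ansSet [Inhabited R] (q : CQ R V) (G : RDFGraph R) : Set (V → Option R) :=
  {π | (∀ x, (π x).isSome ↔ x ∈ varsQ q) ∧ ∀ a ∈ q, appAtomD π a ∈ G}

/-- `E_S[q]`: the expected cardinality of `q` over the graphs represented by `S`. -/
noncomputable def expect [Inhabited R] (S : Summary R) (q : CQ R V) : ℝ :=
  (∑ᶠ G ∈ worlds S, ((ansSet q G).ncard : ℝ)) / ((worlds S).ncard : ℝ)

/-- `v_S[q]`: the variance of the cardinality of `q` over the graphs represented by `S`. -/
noncomputable def varq [Inhabited R] (S : Summary R) (q : CQ R V) : ℝ :=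
  (∑ᶠ G ∈ worlds S, (((ansSet q G).ncard : ℝ) - expect S q) ^ 2) / ((worlds S).ncard : ℝ)

/-- `μ` applied to a term. -/
def muTerm (S : Summary R) : Term R V → Term R V
  | .res r => .res (appMu S r)
  | .var x => .var x

/-- `μ` applied to an atom. -/
def muAtom (S : Summary R) (a : Atom R V) : Atom R V :=
  (muTerm S a.1, muTerm S a.2.1, muTerm S a.2.2)

/-- `μ(q)`: the CQ obtained by applying `μ` to every atom of `q`. -/
def muQ (S : Summary R) (q : CQ R V) : CQ R V := q.image (muAtom S)

/- ## Partitions of a query -/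

/-- A partition of a CQ `q`: mutually disjoint nonempty subsets of `q` covering `q`. -/
def IsPartition (q : CQ R V) (P : Finset (CQ R V)) : Prop :=
  (∀ u ∈ P, u.Nonempty) ∧ (∀ u ∈ P, ∀ u' ∈ P, u ≠ u' → Disjoint u u') ∧ P.biUnion id = q

/-- The edges of the term graph `G_P`. -/
def edgeRel (P : Finset (CQ R V)) (t t' : Term R V) : Prop :=
  ∃ u ∈ P, ∃ a ∈ u, ∃ a' ∈ u,
    (t = a.1 ∧ t' = a'.1) ∨ (t = a.2.1 ∧ t' = a'.2.1) ∨ (t = a.2.2 ∧ t' = a'.2.2)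

/-- Reachability in the term graph `G_P`. -/
def reach (P : Finset (CQ R V)) (t t' : Term R V) : Prop := Relation.EqvGen (edgeRel P) t t'

/-- `P` is unifiable: no two distinct resources of `q` are connected in `G_P`. -/
def UnifiablePart (q : CQ R V) (P : Finset (CQ R V)) : Prop :=
  ∀ r r' : R, Term.res r ∈ termsQ q → Term.res r' ∈ termsQ q →
    reach P (Term.res r) (Term.res r') → r = r'

/-- The partition base `B` of `q`: all unifiable partitions of `q`. -/
def pbase (q : CQ R V) : Set (Finset (CQ R V)) := {P | IsPartition q P ∧ UnifiablePart q P}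

/-- The partial order `⪯` on partitions. -/
def pref (P P' : Finset (CQ R V)) : Prop := ∀ u ∈ P, ∃ u' ∈ P', u ⊆ u'

/-- The strict order `≺` on partitions. -/
def sPref (P P' : Finset (CQ R V)) : Prop := pref P P' ∧ P ≠ P'

/-- Chains from `P` to `P'` in the partition base of `q` (as nonempty lists
`[P = P_0, …, P_ℓ = P']`; the length of the chain is the list length minus one). -/
def chainSet (q : CQ R V) (P P' : Finset (CQ R V)) : Set (List (Finset (CQ R V))) :=
  {l | l ≠ [] ∧ l.Chain' sPref ∧ (∀ X ∈ l, X ∈ pbase q) ∧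
    l.head? = some P ∧ l.getLast? = some P'}

/-- `K(P, P')`: the number of even-length chains minus the number of odd-length chains. -/
noncomputable def Kcoef (q : CQ R V) (P P' : Finset (CQ R V)) : ℤ :=
  ({l ∈ chainSet q P P' | Even (l.length - 1)}.ncard : ℤ)
    - ({l ∈ chainSet q P P' | Odd (l.length - 1)}.ncard : ℤ)

/-- `σ_P`: maps each variable `x` of `q` to the `≤`-least term reachable from `x` in `G_P`. -/
noncomputable def sigmaP [LinearOrder (Term R V)] (q : CQ R V) (P : Finset (CQ R V)) (x : V) :
    Term R V :=
  if h : ((termsQ q).filter (fun t => reach P (Term.var x) t)).Nonempty then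
    ((termsQ q).filter (fun t => reach P (Term.var x) t)).min' h
  else Term.var x

/-- The answer `τ` to `μ(q)` on `H` satisfies the partition `P`. -/
def satisfiesP [LinearOrder (Term R V)] (S : Summary R) (q : CQ R V) (τ : V → Option R)
    (P : Finset (CQ R V)) : Prop :=
  P ∈ pbase q ∧ ∀ x ∈ varsQ q,
    (∀ y, sigmaP q P x = Term.var y → τ x = τ y) ∧
    (∀ r, sigmaP q P x = Term.res r → τ x = some (appMu S r))

/-- `B_τ`: the partitions of the partition base satisfied by `τ`. -/
def Btau [LinearOrder (Term R V)] (S : Summary R) (q : CQ R V) (τ : V → Option R) :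
    Set (Finset (CQ R V)) := {P | satisfiesP S q τ P}

/-- The variables occurring in the range of `σ_P`. -/
noncomputable def vrngP [LinearOrder (Term R V)] (q : CQ R V) (P : Finset (CQ R V)) : Finset V :=
  (varsQ q).filter (fun y => ∃ x ∈ varsQ q, sigmaP q P x = Term.var y)

/-- The `S`-size of an optional bucket. -/
def sizeOpt (S : Summary R) (o : Option R) : ℕ := o.elim 0 (size1 S)

/-- `c(τ, P) = ∏_{x ∈ vrng(σ_P)} size_S(τ(x))`. -/
noncomputable def cCoef [LinearOrder (Term R V)] (S : Summary R) (q : CQ R V)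
    (τ : V → Option R) (P : Finset (CQ R V)) : ℕ :=
  ∏ y ∈ vrngP q P, sizeOpt S (τ y)

/-- `τ(μ(q))`. -/
noncomputable def tauMuQ [Inhabited R] (S : Summary R) (q : CQ R V) (τ : V → Option R) :
    RDFGraph R := (muQ S q).image (appAtomD τ)

/-- `n_h = |{u ∈ P : τ(μ(u)) = {h}}|`. -/
noncomputable def nCount [Inhabited R] (S : Summary R) (τ : V → Option R)
    (P : Finset (CQ R V)) (h : R × R × R) : ℕ :=
  (P.filter (fun u => u.image (fun a => appAtomD τ (muAtom S a)) = ({h} : Finset (R × R × R)))).card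

/-- `F(τ, P)`, defined via falling factorials. -/
noncomputable def Fcoef [Inhabited R] (S : Summary R) (q : CQ R V) (τ : V → Option R)
    (P : Finset (CQ R V)) : ℝ :=
  if ∀ h ∈ tauMuQ S q τ, nCount S τ P h ≤ S.w h then
    ∏ h ∈ tauMuQ S q τ,
      ((S.w h).descFactorial (nCount S τ P h) : ℝ) / ((size3 S h).descFactorial (nCount S τ P h) : ℝ)
  else 0

/-- `Exp_τ(P)`: the `τ`-expansions to `P`. -/
def ExpSet [LinearOrder (Term R V)] (S : Summary R) (q : CQ R V) (τ : V → Option R)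
    (P : Finset (CQ R V)) : Set (V → Option R) :=
  {π | (∀ x, (π x).isSome ↔ x ∈ varsQ q) ∧ (∀ x r, π x = some r → r ∈ S.dom) ∧
    ∀ x ∈ varsQ q,
      Option.map (appMu S) (π x) = τ x ∧
      (∀ y, sigmaP q P x = Term.var y → π x = π y) ∧
      (∀ r, sigmaP q P x = Term.res r → π x = some r)}

/-- `MaxExp_τ(P)`: the `τ`-expansions to `P` that are not `τ`-expansions to any `P' ≻ P`. -/
def MaxExp [LinearOrder (Term R V)] (S : Summary R) (q : CQ R V) (τ : V → Option R)
    (P : Finset (CQ R V)) : Set (V → Option R) :=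
  {π ∈ ExpSet S q τ P | ¬ ∃ P' ∈ Btau S q τ, sPref P P' ∧ π ∈ ExpSet S q τ P'}

/- ## Renaming, unification, q-error -/

def renTerm (ρ : V → V) : Term R V → Term R V
  | .res r => .res r
  | .var x => .var (ρ x)

/-- `ρ(q)`: renaming of the variables of `q` along `ρ`. -/
def renameQ (ρ : V → V) (q : CQ R V) : CQ R V :=
  q.image (fun a => (renTerm ρ a.1, renTerm ρ a.2.1, renTerm ρ a.2.2))

/-- Application of a variable-to-term substitution `κ` to a term. -/
def appK (κ : V → Term R V) : Term R V → Term R V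
  | .res r => .res r
  | .var x => κ x

/-- Two atoms are unifiable if some substitution `κ` makes them equal. -/
def unifAtoms (a1 a2 : Atom R V) : Prop :=
  ∃ κ : V → Term R V,
    (appK κ a1.1, appK κ a1.2.1, appK κ a1.2.2) = (appK κ a2.1, appK κ a2.2.1, appK κ a2.2.2)

/-- `q` is `μ`-unification-free: no two distinct atoms of `μ(q)` are unifiable. -/
def muUnifFree (S : Summary R) (q : CQ R V) : Prop :=
  ∀ a1 ∈ muQ S q, ∀ a2 ∈ muQ S q, a1 ≠ a2 → ¬ unifAtoms a1 a2

/-- The q-error of estimating a cardinality `N` as `E`. -/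
noncomputable def qerror (N E : ℝ) : ℝ := max (max N 1 / max E 1) (max E 1 / max N 1)

/-- A triple of resources viewed as a (variable-free) atom. -/
def resAtom (t : R × R × R) : Atom R V := (Term.res t.1, Term.res t.2.1, Term.res t.2.2)

/-- `μ⁻¹(h)`: the triples over `dom(μ)` that summarise as `h`. -/
def preim (S : Summary R) (h : R × R × R) : Finset (R × R × R) :=
  (S.dom ×ˢ S.dom ×ˢ S.dom).filter (fun t => muT S t = h)

section Aux

variable {R V : Type} [DecidableEq R] [DecidableEq V] [Inhabited R] [LinearOrder (Term R V)]

lemma mem_termsQ_of_mem {q : CQ R V} {a : Atom R V} (ha : a ∈ q) :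
    a.1 ∈ termsQ q ∧ a.2.1 ∈ termsQ q ∧ a.2.2 ∈ termsQ q := by
  refine ⟨?_, ?_, ?_⟩ <;> exact Finset.mem_biUnion.2 ⟨a, ha, by simp⟩

lemma var_mem_varsQ {q : CQ R V} {x : V} (h : (Term.var x : Term R V) ∈ termsQ q) :
    x ∈ varsQ q := by
  obtain ⟨a, ha, hm⟩ := Finset.mem_biUnion.1 h
  simp only [Finset.mem_insert, Finset.mem_singleton] at hm
  refine Finset.mem_biUnion.2 ⟨a, ha, ?_⟩
  unfold varsA
  rcases hm with h1 | h1 | h1 <;> simp [← h1, varsT]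

lemma var_in_termsQ {q : CQ R V} {x : V} (h : x ∈ varsQ q) :
    (Term.var x : Term R V) ∈ termsQ q := by
  obtain ⟨a, ha, hm⟩ := Finset.mem_biUnion.1 h
  unfold varsA at hm
  refine Finset.mem_biUnion.2 ⟨a, ha, ?_⟩
  simp only [Finset.mem_union] at hm
  have key : ∀ t : Term R V, x ∈ varsT t → t = Term.var x := by
    intro t ht
    cases t with
    | res r => simp [varsT] at ht
    | var y => simp [varsT] at ht; rw [ht]
  rcases hm with (h1 | h1) | h1
  · rw [← key _ h1]; simp
  · rw [← key _ h1]; simp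
  · rw [← key _ h1]; simp

lemma reach_equiv (P : Finset (CQ R V)) : Equivalence (reach P) :=
  Relation.EqvGen.is_equivalence _

/-- `σ_P x` is a reachable term of `q` whenever `Term.var x ∈ termsQ q`. -/
lemma sigma_mem {q : CQ R V} {P : Finset (CQ R V)} {x : V}
    (hx : (Term.var x : Term R V) ∈ termsQ q) :
    sigmaP q P x ∈ termsQ q ∧ reach P (Term.var x) (sigmaP q P x) := by
  have hne : ((termsQ q).filter (fun t => reach P (Term.var x) t)).Nonempty :=
    ⟨Term.var x, Finset.mem_filter.2 ⟨hx, (reach_equiv P).refl _⟩⟩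
  have : sigmaP q P x = ((termsQ q).filter (fun t => reach P (Term.var x) t)).min' hne := by
    rw [sigmaP, dif_pos hne]
  have hmem := ((termsQ q).filter (fun t => reach P (Term.var x) t)).min'_mem hne
  rw [← this] at hmem
  exact Finset.mem_filter.1 hmem

lemma sigma_min {q : CQ R V} {P : Finset (CQ R V)} {x : V}
    (hx : (Term.var x : Term R V) ∈ termsQ q) {t : Term R V}
    (ht : t ∈ termsQ q) (hr : reach P (Term.var x) t) :
    sigmaP q P x ≤ t := by
  have hne : ((termsQ q).filter (fun t => reach P (Term.var x) t)).Nonempty :=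
    ⟨Term.var x, Finset.mem_filter.2 ⟨hx, (reach_equiv P).refl _⟩⟩
  rw [sigmaP, dif_pos hne]
  exact Finset.min'_le _ _ (Finset.mem_filter.2 ⟨ht, hr⟩)

lemma sigma_congr {q : CQ R V} {P : Finset (CQ R V)} {x y : V}
    (hx : (Term.var x : Term R V) ∈ termsQ q)
    (hr : reach P (Term.var x) (Term.var y)) :
    sigmaP q P x = sigmaP q P y := by
  have hfeq : ((termsQ q).filter (fun t => reach P (Term.var x) t))
      = ((termsQ q).filter (fun t => reach P (Term.var y) t)) := by
    apply Finset.filter_congr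
    intro t _
    exact ⟨fun h => (reach_equiv P).trans ((reach_equiv P).symm hr) h,
      fun h => (reach_equiv P).trans hr h⟩
  have hne : ((termsQ q).filter (fun t => reach P (Term.var x) t)).Nonempty :=
    ⟨Term.var x, Finset.mem_filter.2 ⟨hx, (reach_equiv P).refl _⟩⟩
  have hne' : ((termsQ q).filter (fun t => reach P (Term.var y) t)).Nonempty := hfeq ▸ hne
  rw [sigmaP, sigmaP, dif_pos hne, dif_pos hne']
  have m2 : ((termsQ q).filter (fun t => reach P (Term.var y) t)).min' hne'
      ∈ ((termsQ q).filter (fun t => reach P (Term.var x) t)) := by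
    rw [hfeq]; exact Finset.min'_mem _ _
  have m1 : ((termsQ q).filter (fun t => reach P (Term.var x) t)).min' hne
      ∈ ((termsQ q).filter (fun t => reach P (Term.var y) t)) := by
    rw [← hfeq]; exact Finset.min'_mem _ _
  exact le_antisymm (Finset.min'_le _ _ m2) (Finset.min'_le _ _ m1)

/-- Core lemma: a substitution compatible with `σ_P` is constant on reachability
classes of terms of `q`. -/
lemma val_reach_core
    (hord : ∀ (r : R) (y : V), (Term.res r : Term R V) < Term.var y)
    {q : CQ R V} {P : Finset (CQ R V)} (hU : UnifiablePart q P)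
    {π : V → Option R}
    (hvar : ∀ x ∈ varsQ q, ∀ y, sigmaP q P x = Term.var y → π x = π y)
    (hres : ∀ x ∈ varsQ q, ∀ r, sigmaP q P x = Term.res r → π x = some r) :
    ∀ t ∈ termsQ q, ∀ t' ∈ termsQ q, reach P t t' → appTD π t = appTD π t' := by
  -- first, the mixed case
  have hmix : ∀ (x : V) (r : R), (Term.var x : Term R V) ∈ termsQ q →
      (Term.res r : Term R V) ∈ termsQ q → reach P (Term.var x) (Term.res r) →
      π x = some r := by
    intro x r hx hrm hreach
    obtain ⟨hsm, hsr⟩ := sigma_mem (P := P) hx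
    have hle := sigma_min (P := P) hx hrm hreach
    match hs : sigmaP q P x with
    | Term.var z =>
        rw [hs] at hle
        exact absurd (lt_of_lt_of_le (hord r z) hle) (lt_irrefl _)
    | Term.res r' =>
        rw [hs] at hsm hsr
        have : r' = r := hU r' r hsm hrm
          ((reach_equiv P).trans ((reach_equiv P).symm hsr) hreach)
        subst this
        exact hres x (var_mem_varsQ hx) r' hs
  intro t ht t' ht' hreach
  match t, t' with
  | Term.res r, Term.res r' =>
      have := hU r r' ht ht' hreach
      subst this; rfl
  | Term.var x, Term.res r =>
      have := hmix x r ht ht' hreach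
      simp [appTD, appT, this]
  | Term.res r, Term.var x =>
      have := hmix x r ht' ht ((reach_equiv P).symm hreach)
      simp [appTD, appT, this]
  | Term.var x, Term.var y =>
      have hxv : x ∈ varsQ q := var_mem_varsQ ht
      have hyv : y ∈ varsQ q := var_mem_varsQ ht'
      have hseq : sigmaP q P x = sigmaP q P y := sigma_congr ht hreach
      match hs : sigmaP q P x with
      | Term.var z =>
          have h1 : π x = π z := hvar x hxv z hs
          have h2 : π y = π z := hvar y hyv z (hseq ▸ hs)
          simp [appTD, appT, h1, h2]
      | Term.res r =>
          have h1 : π x = some r := hres x hxv r hs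
          have h2 : π y = some r := hres y hyv r (hseq ▸ hs)
          simp [appTD, appT, h1, h2]

lemma val_edge
    (hord : ∀ (r : R) (y : V), (Term.res r : Term R V) < Term.var y)
    {q : CQ R V} {P : Finset (CQ R V)} (hpart : IsPartition q P) (hU : UnifiablePart q P)
    {π : V → Option R}
    (hvar : ∀ x ∈ varsQ q, ∀ y, sigmaP q P x = Term.var y → π x = π y)
    (hres : ∀ x ∈ varsQ q, ∀ r, sigmaP q P x = Term.res r → π x = some r) :
    ∀ t t', edgeRel P t t' → appTD π t = appTD π t' := by
  intro t t' ⟨u, hu, b, hb, b', hb', hpos⟩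
  have hbq : b ∈ q := by
    rw [← hpart.2.2]; exact Finset.mem_biUnion.2 ⟨u, hu, hb⟩
  have hbq' : b' ∈ q := by
    rw [← hpart.2.2]; exact Finset.mem_biUnion.2 ⟨u, hu, hb'⟩
  have h1 := mem_termsQ_of_mem hbq
  have h2 := mem_termsQ_of_mem hbq'
  have hreach : reach P t t' := Relation.EqvGen.rel _ _ ⟨u, hu, b, hb, b', hb', hpos⟩
  rcases hpos with ⟨e1, e2⟩ | ⟨e1, e2⟩ | ⟨e1, e2⟩ <;> subst e1 <;> subst e2 <;>
    [exact val_reach_core hord hU hvar hres _ h1.1 _ h2.1 hreach;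
     exact val_reach_core hord hU hvar hres _ h1.2.1 _ h2.2.1 hreach;
     exact val_reach_core hord hU hvar hres _ h1.2.2 _ h2.2.2 hreach]

lemma val_reach_of_edge {P : Finset (CQ R V)} {π : V → Option R}
    (h : ∀ t t', edgeRel P t t' → appTD π t = appTD π t') :
    ∀ t t', reach P t t' → appTD π t = appTD π t' := by
  intro t t' hr
  induction hr with
  | rel a b hab => exact h a b hab
  | refl a => rfl
  | symm a b _ ih => exact ih.symm
  | trans a b c _ _ ih1 ih2 => exact ih1.trans ih2

lemma option_eq_of_getD {o o' : Option R} (h1 : o.isSome) (h2 : o'.isSome)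
    (h : o.getD default = o'.getD default) : o = o' := by
  cases o with
  | none => simp at h1
  | some r => cases o' with
    | none => simp at h2
    | some r' => simpa using h

end Aux

/-- For `π ∈ MaxExp_τ(P)` and all atoms `a, a' ∈ q`: the atoms `a` and
`a'` lie in a common block of `P` if and only if `π(a) = π(a')`. -/
theorem maxExp_block_iff {R V : Type} [DecidableEq R] [DecidableEq V] [Inhabited R]
    [LinearOrder (Term R V)]
    (hord : ∀ (r : R) (y : V), (Term.res r : Term R V) < Term.var y)
    (S : Summary R) (q : CQ R V) (hq : resQ q ⊆ S.dom)
    (τ : V → Option R) (hτ : τ ∈ ansSet (muQ S q) S.H)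
    (P : Finset (CQ R V)) (hP : P ∈ Btau S q τ)
    (π : V → Option R) (hπ : π ∈ MaxExp S q τ P) :
    ∀ a ∈ q, ∀ a' ∈ q,
      ((∃ u ∈ P, a ∈ u ∧ a' ∈ u) ↔ appAtomD π a = appAtomD π a') := by
  obtain ⟨hExp, hmax⟩ := hπ
  obtain ⟨hsome, hdom, hcond⟩ := hExp
  obtain ⟨⟨hpart, hU⟩, -⟩ := hP
  have hvar : ∀ x ∈ varsQ q, ∀ y, sigmaP q P x = Term.var y → π x = π y :=
    fun x hx y hy => (hcond x hx).2.1 y hy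
  have hres : ∀ x ∈ varsQ q, ∀ r, sigmaP q P x = Term.res r → π x = some r :=
    fun x hx r hr => (hcond x hx).2.2 r hr
  have hmu : ∀ x ∈ varsQ q, Option.map (appMu S) (π x) = τ x := fun x hx => (hcond x hx).1
  have hedge := val_edge hord hpart hU hvar hres
  have hblq : ∀ v ∈ P, v ⊆ q := by
    intro v hv
    rw [← hpart.2.2]
    exact Finset.subset_biUnion_of_mem id hv
  have hfwd : ∀ b b' : Atom R V, (∃ u ∈ P, b ∈ u ∧ b' ∈ u) →
      appAtomD π b = appAtomD π b' := by
    rintro b b' ⟨u, hu, hb, hb'⟩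
    have e1 : appTD π b.1 = appTD π b'.1 :=
      hedge _ _ ⟨u, hu, b, hb, b', hb', Or.inl ⟨rfl, rfl⟩⟩
    have e2 : appTD π b.2.1 = appTD π b'.2.1 :=
      hedge _ _ ⟨u, hu, b, hb, b', hb', Or.inr (Or.inl ⟨rfl, rfl⟩)⟩
    have e3 : appTD π b.2.2 = appTD π b'.2.2 :=
      hedge _ _ ⟨u, hu, b, hb, b', hb', Or.inr (Or.inr ⟨rfl, rfl⟩)⟩
    simp [appAtomD, e1, e2, e3]
  intro a ha a' ha'
  constructor
  · exact hfwd a a'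
  · intro hval
    by_contra hcon
    obtain ⟨u, hu, hau⟩ : ∃ u ∈ P, a ∈ u := by
      have : a ∈ P.biUnion id := by rw [hpart.2.2]; exact ha
      obtain ⟨u, hu, h⟩ := Finset.mem_biUnion.1 this
      exact ⟨u, hu, h⟩
    obtain ⟨u', hu', hau'⟩ : ∃ u' ∈ P, a' ∈ u' := by
      have : a' ∈ P.biUnion id := by rw [hpart.2.2]; exact ha'
      obtain ⟨u', hu', h⟩ := Finset.mem_biUnion.1 this
      exact ⟨u', hu', h⟩
    set P' : Finset (CQ R V) := insert (u ∪ u') ((P.erase u).erase u') with hP'def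
    have hmem' : ∀ v, v ∈ (P.erase u).erase u' → v ∈ P ∧ v ≠ u ∧ v ≠ u' := by
      intro v hv
      obtain ⟨h1, h2⟩ := Finset.mem_erase.1 hv
      obtain ⟨h3, h4⟩ := Finset.mem_erase.1 h2
      exact ⟨h4, h3, h1⟩
    -- values of π agree on edges of P'
    have hedge' : ∀ t t', edgeRel P' t t' → appTD π t = appTD π t' := by
      rintro t t' ⟨v, hv, b, hb, b', hb', hpos⟩
      rcases Finset.mem_insert.1 hv with hveq | hvmem
      · subst hveq
        have key : ∀ c ∈ u ∪ u', appAtomD π c = appAtomD π a := by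
          intro c hc
          rcases Finset.mem_union.1 hc with h | h
          · exact hfwd c a ⟨u, hu, h, hau⟩
          · exact (hfwd c a' ⟨u', hu', h, hau'⟩).trans hval.symm
        have hbb : appAtomD π b = appAtomD π b' := (key b hb).trans (key b' hb').symm
        simp only [appAtomD, Prod.mk.injEq] at hbb
        rcases hpos with ⟨e1, e2⟩ | ⟨e1, e2⟩ | ⟨e1, e2⟩ <;> subst e1 <;> subst e2
        · exact hbb.1
        · exact hbb.2.1
        · exact hbb.2.2
      · exact hedge t t' ⟨v, (hmem' v hvmem).1, b, hb, b', hb', hpos⟩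
    have hreach' := val_reach_of_edge hedge'
    -- P' is unifiable
    have hU' : UnifiablePart q P' := by
      intro r r' _ _ hrch
      have := hreach' _ _ hrch
      simpa [appTD, appT] using this
    -- P' is a partition of q
    have hpart' : IsPartition q P' := by
      refine ⟨?_, ?_, ?_⟩
      · intro v hv
        rcases Finset.mem_insert.1 hv with h | h
        · subst h; exact ⟨a, Finset.mem_union_left _ hau⟩
        · exact hpart.1 v (hmem' v h).1
      · intro v hv v' hv' hvv'
        have hdisj := hpart.2.1
        rcases Finset.mem_insert.1 hv with h | h <;> rcases Finset.mem_insert.1 hv' with h' | h'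
        · exact absurd (h.trans h'.symm) hvv'
        · subst h
          obtain ⟨hv'P, hne1, hne2⟩ := hmem' v' h'
          exact Finset.disjoint_union_left.2
            ⟨hdisj u hu v' hv'P (Ne.symm hne1), hdisj u' hu' v' hv'P (Ne.symm hne2)⟩
        · subst h'
          obtain ⟨hvP, hne1, hne2⟩ := hmem' v h
          exact Finset.disjoint_union_right.2 ⟨hdisj v hvP u hu hne1, hdisj v hvP u' hu' hne2⟩
        · exact hdisj v (hmem' v h).1 v' (hmem' v' h').1 hvv'
      · apply Finset.Subset.antisymm
        · intro b hb
          obtain ⟨v, hv, hbv⟩ := Finset.mem_biUnion.1 hb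
          rcases Finset.mem_insert.1 hv with h | h
          · subst h
            rcases Finset.mem_union.1 hbv with h | h
            · exact hblq u hu h
            · exact hblq u' hu' h
          · exact hblq v (hmem' v h).1 hbv
        · intro b hb
          have : b ∈ P.biUnion id := by rw [hpart.2.2]; exact hb
          obtain ⟨v, hv, hbv⟩ := Finset.mem_biUnion.1 this
          by_cases hvu : v = u
          · exact Finset.mem_biUnion.2
              ⟨u ∪ u', Finset.mem_insert_self _ _, Finset.mem_union_left _ (hvu ▸ hbv)⟩
          by_cases hvu' : v = u'
          · exact Finset.mem_biUnion.2
              ⟨u ∪ u', Finset.mem_insert_self _ _, Finset.mem_union_right _ (hvu' ▸ hbv)⟩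
          · exact Finset.mem_biUnion.2
              ⟨v, Finset.mem_insert_of_mem
                (Finset.mem_erase.2 ⟨hvu', Finset.mem_erase.2 ⟨hvu, hv⟩⟩), hbv⟩
    have huu' : u ≠ u' := fun h => hcon ⟨u, hu, hau, h ▸ hau'⟩
    -- P ≺ P'
    have hsp : sPref P P' := by
      constructor
      · intro v hv
        by_cases h : v = u
        · exact ⟨u ∪ u', Finset.mem_insert_self _ _, h ▸ Finset.subset_union_left⟩
        by_cases h' : v = u'
        · exact ⟨u ∪ u', Finset.mem_insert_self _ _, h' ▸ Finset.subset_union_right⟩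
        · exact ⟨v, Finset.mem_insert_of_mem
            (Finset.mem_erase.2 ⟨h', Finset.mem_erase.2 ⟨h, hv⟩⟩), subset_rfl⟩
      · intro hPP
        exact hcon ⟨u ∪ u', by rw [hPP]; exact Finset.mem_insert_self _ _,
          Finset.mem_union_left _ hau, Finset.mem_union_right _ hau'⟩
    -- σ_{P'} conditions for π
    have hvar' : ∀ x ∈ varsQ q, ∀ y, sigmaP q P' x = Term.var y → π x = π y := by
      intro x hx y hs
      obtain ⟨hsm, hsr⟩ := sigma_mem (P := P') (var_in_termsQ hx)
      rw [hs] at hsm hsr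
      have hy : y ∈ varsQ q := var_mem_varsQ hsm
      have hv := hreach' _ _ hsr
      exact option_eq_of_getD ((hsome x).2 hx) ((hsome y).2 hy)
        (by simpa [appTD, appT] using hv)
    have hres' : ∀ x ∈ varsQ q, ∀ r, sigmaP q P' x = Term.res r → π x = some r := by
      intro x hx r hs
      obtain ⟨hsm, hsr⟩ := sigma_mem (P := P') (var_in_termsQ hx)
      rw [hs] at hsr
      have hv := hreach' _ _ hsr
      have hps : (π x).isSome := (hsome x).2 hx
      cases hpx : π x with
      | none => rw [hpx] at hps; simp at hps
      | some r0 =>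
        have : r0 = r := by simpa [appTD, appT, hpx] using hv
        rw [this]
    -- P' ∈ B_τ
    have hBt : P' ∈ Btau S q τ := by
      refine ⟨⟨hpart', hU'⟩, ?_⟩
      intro x hx
      constructor
      · intro y hy
        have hpx := hvar' x hx y hy
        obtain ⟨hsm, -⟩ := sigma_mem (P := P') (var_in_termsQ hx)
        rw [hy] at hsm
        have hyv : y ∈ varsQ q := var_mem_varsQ hsm
        rw [← hmu x hx, ← hmu y hyv, hpx]
      · intro r hr
        rw [← hmu x hx, hres' x hx r hr]
        rfl
    exact hmax ⟨P', hBt, hsp, hsome, hdom, fun x hx => ⟨hmu x hx, hvar' x hx, hres' x hx⟩⟩
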